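/- arXiv:2501.17696 — 4 statements merged into one kernel-verified Lean document; each statement's English description precedes it below -/
import Mathlib

section
/- For a 2×2 real symmetric matrix with entries a₁₁, a₁₂, a₂₂, there exists an angle θ such that the Jacobi rotation G(θ) = [[cos θ, -sin θ],[sin θ, cos θ]] applied as G A Gᵀ produces a matrix B with B₁₂ = 0 and |B₁₁| ≥ |a₁₁|. -/
open Matrix Real

/-! With `d = (a₁₁ - a₂₂)/2` and `m = (a₁₁ + a₂₂)/2`, the entries of `B = G(θ) A G(θ)ᵀ` are
`B₁₂ = d sin 2θ + a₁₂ cos 2θ` and `B₁₁ = m + d cos 2θ - a₁₂ sin 2θ`. Harmonic addition gives an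
angle `φ` with `d sin φ + a₁₂ cos φ = 0`; then `t = d cos φ - a₁₂ sin φ` has `t² = d² + a₁₂²`, and
the two rotations `2θ = φ` and `2θ = φ + π` both kill `B₁₂` and give `B₁₁ = m ± t`.
Since `a₁₁ = m + d` with `|d| ≤ |t|`, one of them has `|B₁₁| ≥ |m| + |t| ≥ |a₁₁|`. -/

lemma mul_sin_add_mul_cos_eq (x y φ : ℝ) :
    x * sin φ + y * cos φ = ‖(⟨x, y⟩ : ℂ)‖ * sin (φ + Complex.arg ⟨x, y⟩) := by
  rw [sin_add]
  linear_combination -sin φ * Complex.norm_mul_cos_arg ⟨x, y⟩ -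
    cos φ * Complex.norm_mul_sin_arg ⟨x, y⟩

lemma exists_mul_sin_add_mul_cos_eq_zero (x y : ℝ) : ∃ φ, x * sin φ + y * cos φ = 0 :=
  ⟨-Complex.arg ⟨x, y⟩, by rw [mul_sin_add_mul_cos_eq, neg_add_cancel, sin_zero, mul_zero]⟩

lemma abs_add_abs_le_max_abs_add_abs_sub (m t : ℝ) : |m| + |t| ≤ max |m + t| |m - t| := by
  rw [le_max_iff]
  grind

lemma abs_le_max_abs_add_abs_sub {x m t : ℝ} (h : |x - m| ≤ |t|) :
    |x| ≤ max |m + t| |m - t| :=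
  calc |x| = |m + (x - m)| := by rw [add_sub_cancel]
    _ ≤ |m| + |x - m| := abs_add_le _ _
    _ ≤ |m| + |t| := by gcongr
    _ ≤ max |m + t| |m - t| := abs_add_abs_le_max_abs_add_abs_sub m t

noncomputable def givens (θ : ℝ) : Matrix (Fin 2) (Fin 2) ℝ := !![cos θ, -sin θ; sin θ, cos θ]

lemma givens_mul_mul_transpose_apply_zero_zero (θ a b c : ℝ) :
    (givens θ * !![a, b; b, c] * (givens θ)ᵀ) 0 0
      = (a + c) / 2 + (a - c) / 2 * cos (2 * θ) - b * sin (2 * θ) := by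
  simp only [givens, mul_apply, transpose_apply, Fin.sum_univ_two, of_apply, cons_val',
    cons_val_zero, cons_val_one, empty_val', cons_val_fin_one, sin_two_mul, cos_two_mul']
  linear_combination (a + c) / 2 * sin_sq_add_cos_sq θ

lemma givens_mul_mul_transpose_apply_zero_one (θ a b c : ℝ) :
    (givens θ * !![a, b; b, c] * (givens θ)ᵀ) 0 1
      = (a - c) / 2 * sin (2 * θ) + b * cos (2 * θ) := by
  simp only [givens, mul_apply, transpose_apply, Fin.sum_univ_two, of_apply, cons_val',
    cons_val_zero, cons_val_one, empty_val', cons_val_fin_one, sin_two_mul, cos_two_mul']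
  ring

theorem stmt_0 (a11 a12 a22 : ℝ) :
    ∃ θ : ℝ,
      let G : Matrix (Fin 2) (Fin 2) ℝ := !![Real.cos θ, -Real.sin θ; Real.sin θ, Real.cos θ]
      let A : Matrix (Fin 2) (Fin 2) ℝ := !![a11, a12; a12, a22]
      let B : Matrix (Fin 2) (Fin 2) ℝ := G * A * Gᵀ
      B 0 1 = 0 ∧ |a11| ≤ |B 0 0| := by
  suffices ∃ θ, (givens θ * !![a11, a12; a12, a22] * (givens θ)ᵀ) 0 1 = 0 ∧
      |a11| ≤ |(givens θ * !![a11, a12; a12, a22] * (givens θ)ᵀ) 0 0| from this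
  simp only [givens_mul_mul_transpose_apply_zero_zero, givens_mul_mul_transpose_apply_zero_one]
  set d := (a11 - a22) / 2
  set m := (a11 + a22) / 2
  obtain ⟨φ, hφ⟩ := exists_mul_sin_add_mul_cos_eq_zero d a12
  set t := d * cos φ - a12 * sin φ
  have ht : |a11 - m| ≤ |t| := by
    have ht2 : t ^ 2 = d ^ 2 + a12 ^ 2 := by
      linear_combination (d ^ 2 + a12 ^ 2) * sin_sq_add_cos_sq φ - (d * sin φ + a12 * cos φ) * hφ
    rw [← sq_le_sq, show a11 - m = d by ring, ht2]
    exact le_add_of_nonneg_right (sq_nonneg a12)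
  rcases le_max_iff.mp (abs_le_max_abs_add_abs_sub ht) with h | h
  · refine ⟨φ / 2, ?_, h.trans_eq ?_⟩
    · rwa [mul_div_cancel₀ φ two_ne_zero]
    · rw [mul_div_cancel₀ φ two_ne_zero, add_sub_assoc]
  · refine ⟨(φ + π) / 2, ?_, h.trans_eq ?_⟩
    · rw [mul_div_cancel₀ _ two_ne_zero, sin_add_pi, cos_add_pi]
      linear_combination -hφ
    · rw [mul_div_cancel₀ _ two_ne_zero, sin_add_pi, cos_add_pi]
      congr 1
      ring
end

section
/- For a 2×2 real symmetric matrix A, if B = G(θ) A G(θ)ᵀ is the rotated matrix with B₁₂ = 0, then B₁₁ and B₂₂ are the eigenvalues of A, and |B₁₁| + |B₂₂| ≥ |a₁₁| + |a₂₂|. -/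
open Matrix Real

theorem stmt_1 (a11 a12 a22 θ : ℝ)
    (A : Matrix (Fin 2) (Fin 2) ℝ) (hA : A = !![a11, a12; a12, a22])
    (G : Matrix (Fin 2) (Fin 2) ℝ)
    (hG : G = !![Real.cos θ, -Real.sin θ; Real.sin θ, Real.cos θ])
    (B : Matrix (Fin 2) (Fin 2) ℝ) (hB : B = G * A * Gᵀ)
    (hoff : B 0 1 = 0) :
    (A - B 0 0 • (1 : Matrix (Fin 2) (Fin 2) ℝ)).det = 0 ∧
    (A - B 1 1 • (1 : Matrix (Fin 2) (Fin 2) ℝ)).det = 0 ∧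
    |a11| + |a22| ≤ |B 0 0| + |B 1 1| := by
  have pyth := sin_sq_add_cos_sq θ
  have hGT : Gᵀ = !![Real.cos θ, Real.sin θ; -Real.sin θ, Real.cos θ] := by
    rw [hG]; ext i j; fin_cases i <;> fin_cases j <;> rfl
  have hGO : Gᵀ * G = 1 := by
    rw [hGT, hG]
    ext i j
    fin_cases i <;> fin_cases j <;>
      simp [Matrix.mul_apply, Fin.sum_univ_two, Matrix.one_apply] <;> linarith [pyth]
  have hGO' : G * Gᵀ = 1 := by
    rw [hGT, hG]
    ext i j
    fin_cases i <;> fin_cases j <;>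
      simp [Matrix.mul_apply, Fin.sum_univ_two, Matrix.one_apply] <;> linarith [pyth]
  have hsym : B 1 0 = 0 := by
    rw [← hoff, hB, hGT, hA, hG]
    simp [Matrix.mul_apply, Fin.sum_univ_two]
    ring
  have hdet : ∀ l : ℝ, (A - l • (1 : Matrix (Fin 2) (Fin 2) ℝ)).det
      = (B - l • (1 : Matrix (Fin 2) (Fin 2) ℝ)).det := by
    intro l
    have hBe : B - l • (1 : Matrix (Fin 2) (Fin 2) ℝ)
        = G * (A - l • (1 : Matrix (Fin 2) (Fin 2) ℝ)) * Gᵀ := by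
      rw [hB, Matrix.mul_sub, Matrix.sub_mul]
      congr 1
      rw [Matrix.mul_smul, Matrix.smul_mul, Matrix.mul_one, hGO']
    have hdg : G.det * Gᵀ.det = 1 := by
      rw [← Matrix.det_mul, hGO']; simp
    rw [hBe, Matrix.det_mul, Matrix.det_mul]
    linear_combination -(A - l • (1 : Matrix (Fin 2) (Fin 2) ℝ)).det * hdg
  have hdetB : ∀ l : ℝ, (B - l • (1 : Matrix (Fin 2) (Fin 2) ℝ)).det
      = (B 0 0 - l) * (B 1 1 - l) := by
    intro l
    rw [Matrix.det_fin_two]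
    simp [hsym, hoff]
  have hABG : A = Gᵀ * B * G := by
    have h2 : Gᵀ * (G * A * Gᵀ) * G = (Gᵀ * G) * (A * (Gᵀ * G)) := by
      simp only [Matrix.mul_assoc]
    rw [hB, h2, hGO, Matrix.one_mul, Matrix.mul_one]
  have ha11 : a11 = (cos θ)^2 * B 0 0 + (sin θ)^2 * B 1 1 := by
    have h := congrFun (congrFun hABG 0) 0
    rw [hA, hGT, hG] at h
    simp [Matrix.mul_apply, Matrix.vecMul, dotProduct, Fin.sum_univ_two, hoff, hsym] at h
    rw [h]; ring
  have ha22 : a22 = (sin θ)^2 * B 0 0 + (cos θ)^2 * B 1 1 := by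
    have h := congrFun (congrFun hABG 1) 1
    rw [hA, hGT, hG] at h
    simp [Matrix.mul_apply, Matrix.vecMul, dotProduct, Fin.sum_univ_two, hoff, hsym] at h
    rw [h]; ring
  refine ⟨?_, ?_, ?_⟩
  · rw [hdet, hdetB]; ring
  · rw [hdet, hdetB]; ring
  · have h1 : |a11| ≤ (cos θ)^2 * |B 0 0| + (sin θ)^2 * |B 1 1| := by
      rw [ha11]
      refine (abs_add_le _ _).trans ?_
      rw [abs_mul, abs_mul, abs_of_nonneg (sq_nonneg (cos θ)),
        abs_of_nonneg (sq_nonneg (sin θ))]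
    have h2 : |a22| ≤ (sin θ)^2 * |B 0 0| + (cos θ)^2 * |B 1 1| := by
      rw [ha22]
      refine (abs_add_le _ _).trans ?_
      rw [abs_mul, abs_mul, abs_of_nonneg (sq_nonneg (cos θ)),
        abs_of_nonneg (sq_nonneg (sin θ))]
    have key : (cos θ)^2*|B 0 0| + (sin θ)^2*|B 1 1| + ((sin θ)^2*|B 0 0| + (cos θ)^2*|B 1 1|)
        = |B 0 0| + |B 1 1| := by linear_combination |B 0 0| * pyth + |B 1 1| * pyth
    linarith
end

section
/- Let A = M L D Lᵀ Mᵀ with M orthogonal, L invertible lower triangular, D = diag(D₁₁, 0) with D₁₁ invertible of size r. Set c = Mᵀb, partitioned as (c₁, c₂) with c₁ ∈ ℝʳ. If z₁ ∈ ℝʳ satisfies (L₁₁ᵀL₁₁ + L₂₁ᵀL₂₁) z₁ = L₁₁ᵀc₁ + L₂₁ᵀc₂, then any x̂ with D Lᵀ Mᵀ x̂ = (z₁, 0) is a least squares solution of Ax = b. -/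
/-!
Since `Mᵀ M = 1` and `D` is symmetric, `A` is symmetric and the normal equations read
`A (b - A x̂) = 0`. Writing `y = (z₁, 0)`, one has `A x̂ = M L y`, so they reduce to
`D Lᵀ L y = D Lᵀ c`; as `D` only sees the first block, this is the first block row of
`Lᵀ L y = Lᵀ c`, which is exactly the equation defining `z₁`.
-/

open Matrix

section LeastSquares

variable {R m n : Type*} [Fintype m] [Fintype n] [CommRing R]

theorem sum_sq_add_of_dotProduct_eq_zero {e w : m → R} (h : e ⬝ᵥ w = 0) :
    ∑ i, (e + w) i ^ 2 = ∑ i, e i ^ 2 + ∑ i, w i ^ 2 := by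
  have hexpand : ∑ i, (e + w) i ^ 2 = ∑ i, e i ^ 2 + 2 * (e ⬝ᵥ w) + ∑ i, w i ^ 2 := by
    simp only [Pi.add_apply, dotProduct, Finset.mul_sum, ← Finset.sum_add_distrib]
    exact Finset.sum_congr rfl fun i _ => by ring
  rw [hexpand, h, mul_zero, add_zero]

theorem sum_sq_sub_mulVec_le_of_normal_eq [LinearOrder R] [IsStrictOrderedRing R]
    {A : Matrix m n R} {b : m → R} {xhat : n → R}
    (hnormal : (Aᵀ * A) *ᵥ xhat = Aᵀ *ᵥ b) (x : n → R) :
    ∑ i, (b - A *ᵥ xhat) i ^ 2 ≤ ∑ i, (b - A *ᵥ x) i ^ 2 := by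
  set e := b - A *ᵥ xhat
  have hAe : Aᵀ *ᵥ e = 0 := by
    rw [mulVec_sub, ← hnormal, ← mulVec_mulVec, sub_self]
  have horth : e ⬝ᵥ (A *ᵥ (xhat - x)) = 0 := by
    rw [dotProduct_mulVec, ← mulVec_transpose, hAe, zero_dotProduct]
  have hsplit : b - A *ᵥ x = e + A *ᵥ (xhat - x) := by
    rw [mulVec_sub, sub_add_sub_cancel]
  rw [hsplit, sum_sq_add_of_dotProduct_eq_zero horth]
  exact le_add_of_nonneg_right (Finset.sum_nonneg fun i _ => sq_nonneg _)

end LeastSquares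

section Factorization

variable {R m k l : Type*} [Fintype m] [Fintype k] [DecidableEq k] [Fintype l]
  [CommRing R]

theorem normal_eq_of_factorization {A : Matrix m m R} {M : Matrix m k R} {L : Matrix k l R}
    {D : Matrix l l R} (hM : Mᵀ * M = 1) (hD : Dᵀ = D) (hA : A = M * L * D * Lᵀ * Mᵀ)
    {b xhat : m → R} {y : l → R} (hxhat : (D * Lᵀ * Mᵀ) *ᵥ xhat = y)
    (hy : D *ᵥ (Lᵀ *ᵥ (L *ᵥ y)) = D *ᵥ (Lᵀ *ᵥ (Mᵀ *ᵥ b))) :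
    (Aᵀ * A) *ᵥ xhat = Aᵀ *ᵥ b := by
  have hAT : Aᵀ = A := by
    rw [hA]; simp only [transpose_mul, transpose_transpose, hD, Matrix.mul_assoc]
  have hAxhat : A *ᵥ xhat = M *ᵥ (L *ᵥ y) := by
    rw [hA, ← hxhat]; simp only [mulVec_mulVec, Matrix.mul_assoc]
  have hMM : Mᵀ *ᵥ (M *ᵥ (L *ᵥ y)) = L *ᵥ y := by
    rw [mulVec_mulVec, hM, one_mulVec]
  rw [hAT, ← mulVec_mulVec, hAxhat, hA]
  simp only [← mulVec_mulVec]
  rw [hMM, hy]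

end Factorization

section Blocks

variable {R p q : Type*} [Fintype p] [Fintype q] [CommRing R]

theorem fromBlocks_mulVec_sum_elim_zero (P : Matrix p p R) (Q : Matrix p q R)
    (S : Matrix q p R) (T : Matrix q q R) (z : p → R) :
    fromBlocks P Q S T *ᵥ Sum.elim z 0 = Sum.elim (P *ᵥ z) (S *ᵥ z) := by
  simp [fromBlocks_mulVec]

theorem fromBlocks_mulVec_unitLower_transpose_mulVec [DecidableEq q] (P L₁₁ : Matrix p p R)
    (L₂₁ : Matrix q p R) (u : p → R) (v : q → R) :
    fromBlocks P 0 0 (0 : Matrix q q R) *ᵥ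
        ((fromBlocks L₁₁ 0 L₂₁ (1 : Matrix q q R))ᵀ *ᵥ Sum.elim u v) =
      Sum.elim (P *ᵥ (L₁₁ᵀ *ᵥ u + L₂₁ᵀ *ᵥ v)) 0 := by
  simp [fromBlocks_transpose, fromBlocks_mulVec]

end Blocks

theorem stmt_7_general (r m : ℕ)
    (A M L D : Matrix (Fin r ⊕ Fin m) (Fin r ⊕ Fin m) ℝ)
    (L₁₁ : Matrix (Fin r) (Fin r) ℝ) (L₂₁ : Matrix (Fin m) (Fin r) ℝ)
    (d : Fin r → ℝ)
    (hM : Mᵀ * M = 1)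
    (hL : L = Matrix.fromBlocks L₁₁ 0 L₂₁ 1)
    (hD : D = Matrix.fromBlocks (Matrix.diagonal d) 0 0 0)
    (hA : A = M * L * D * Lᵀ * Mᵀ)
    (b : Fin r ⊕ Fin m → ℝ) (c : Fin r ⊕ Fin m → ℝ) (hc : c = Mᵀ *ᵥ b)
    (c₁ : Fin r → ℝ) (hc₁ : c₁ = c ∘ Sum.inl)
    (c₂ : Fin m → ℝ) (hc₂ : c₂ = c ∘ Sum.inr)
    (z₁ : Fin r → ℝ)
    (hz₁ : (L₁₁ᵀ * L₁₁ + L₂₁ᵀ * L₂₁) *ᵥ z₁ = L₁₁ᵀ *ᵥ c₁ + L₂₁ᵀ *ᵥ c₂)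
    (xhat : Fin r ⊕ Fin m → ℝ)
    (hxhat : (D * Lᵀ * Mᵀ) *ᵥ xhat = Sum.elim z₁ 0) :
    ∀ x : Fin r ⊕ Fin m → ℝ,
      ∑ i, (b - A *ᵥ xhat) i ^ 2 ≤ ∑ i, (b - A *ᵥ x) i ^ 2 := by
  have hDT : Dᵀ = D := by
    simp only [hD, fromBlocks_transpose, diagonal_transpose, transpose_zero]
  have hc_blocks : Mᵀ *ᵥ b = Sum.elim c₁ c₂ := by
    rw [← hc, hc₁, hc₂, Sum.elim_comp_inl_inr]
  have hy : D *ᵥ (Lᵀ *ᵥ (L *ᵥ Sum.elim z₁ 0)) = D *ᵥ (Lᵀ *ᵥ (Mᵀ *ᵥ b)) := by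
    rw [hc_blocks, hL, hD, fromBlocks_mulVec_sum_elim_zero,
      fromBlocks_mulVec_unitLower_transpose_mulVec, fromBlocks_mulVec_unitLower_transpose_mulVec,
      mulVec_mulVec, mulVec_mulVec, ← add_mulVec, hz₁]
  exact sum_sq_sub_mulVec_le_of_normal_eq (normal_eq_of_factorization hM hDT hA hxhat hy)

theorem stmt_7 (r m : ℕ)
    (A M L D : Matrix (Fin r ⊕ Fin m) (Fin r ⊕ Fin m) ℝ)
    (L₁₁ : Matrix (Fin r) (Fin r) ℝ) (L₂₁ : Matrix (Fin m) (Fin r) ℝ)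
    (d : Fin r → ℝ)
    (hM : Mᵀ * M = 1)
    (hL : L = Matrix.fromBlocks L₁₁ 0 L₂₁ 1)
    (hL11 : IsUnit L₁₁.det)
    (hL11lower : ∀ i j : Fin r, i < j → L₁₁ i j = 0)
    (hD : D = Matrix.fromBlocks (Matrix.diagonal d) 0 0 0)
    (hd : ∀ i, d i ≠ 0)
    (hA : A = M * L * D * Lᵀ * Mᵀ)
    (b : Fin r ⊕ Fin m → ℝ) (c : Fin r ⊕ Fin m → ℝ) (hc : c = Mᵀ *ᵥ b)
    (c₁ : Fin r → ℝ) (hc₁ : c₁ = c ∘ Sum.inl)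
    (c₂ : Fin m → ℝ) (hc₂ : c₂ = c ∘ Sum.inr)
    (z₁ : Fin r → ℝ)
    (hz₁ : (L₁₁ᵀ * L₁₁ + L₂₁ᵀ * L₂₁) *ᵥ z₁ = L₁₁ᵀ *ᵥ c₁ + L₂₁ᵀ *ᵥ c₂)
    (xhat : Fin r ⊕ Fin m → ℝ)
    (hxhat : (D * Lᵀ * Mᵀ) *ᵥ xhat = Sum.elim z₁ 0) :
    ∀ x : Fin r ⊕ Fin m → ℝ,
      ∑ i, (b - A *ᵥ xhat) i ^ 2 ≤ ∑ i, (b - A *ᵥ x) i ^ 2 :=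
  stmt_7_general r m A M L D L₁₁ L₂₁ d hM hL hD hA b c hc c₁ hc₁ c₂ hc₂ z₁ hz₁ xhat hxhat
end

section
/- Let A be an n×n real symmetric matrix normalized so that max_{i,j}|a_{ij}| = 1, and suppose that at each elimination step all entries of the computed unit lower triangular factor satisfy |L_{ij}| ≤ √2. Then the entries of the k-th Schur complement A^{(k)} satisfy max_{i,j}|a^{(k)}_{ij}| ≤ 1 + 2∑_{i=1}^{k−1}|d_i|, where d₁,…,d_{k−1} are the pivots used in the first k−1 steps. -/
open Matrix Real

theorem abs_sum_mul_mul_le_sq_mul_sum_abs {ι : Type*} (s : Finset ι) (x d y : ι → ℝ) {c : ℝ}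
    (hx : ∀ m, |x m| ≤ c) (hy : ∀ m, |y m| ≤ c) :
    |∑ m ∈ s, x m * d m * y m| ≤ c ^ 2 * ∑ m ∈ s, |d m| := by
  rw [Finset.mul_sum]
  refine (Finset.abs_sum_le_sum_abs _ _).trans (Finset.sum_le_sum fun m _ => ?_)
  have hc : 0 ≤ c := (abs_nonneg _).trans (hx m)
  calc |x m * d m * y m| = |x m| * |y m| * |d m| := by rw [abs_mul, abs_mul]; ring
    _ ≤ c * c * |d m| := by gcongr <;> [exact hx m; exact hy m]
    _ = c ^ 2 * |d m| := by ring

theorem stmt_13_general (n : ℕ) (A : Matrix (Fin n) (Fin n) ℝ)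
    (hAnorm : ∀ i j, |A i j| ≤ 1)
    (L : Fin n → ℕ → ℝ) (hL : ∀ i mm, |L i mm| ≤ Real.sqrt 2)
    (d : ℕ → ℝ) (k : ℕ) :
    ∀ i j : Fin n,
      |A i j - ∑ mm ∈ Finset.range (k - 1), L i mm * d mm * L j mm| ≤
        1 + 2 * ∑ mm ∈ Finset.range (k - 1), |d mm| := by
  intro i j
  have hsum := abs_sum_mul_mul_le_sq_mul_sum_abs (Finset.range (k - 1)) (L i) d (L j)
    (hL i) (hL j)
  rw [sq_sqrt zero_le_two] at hsum
  exact (abs_sub _ _).trans (add_le_add (hAnorm i j) hsum)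

theorem stmt_13 (n : ℕ) (A : Matrix (Fin n) (Fin n) ℝ)
    (hAsymm : Aᵀ = A)
    (hAnorm : ∀ i j, |A i j| ≤ 1)
    (L : Fin n → ℕ → ℝ) (hL : ∀ i mm, |L i mm| ≤ Real.sqrt 2)
    (d : ℕ → ℝ) (k : ℕ) (hk : 1 ≤ k) :
    ∀ i j : Fin n,
      |A i j - ∑ mm ∈ Finset.range (k - 1), L i mm * d mm * L j mm| ≤
        1 + 2 * ∑ mm ∈ Finset.range (k - 1), |d mm| :=
  stmt_13_general n A hAnorm L hL d k
end
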